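/- arXiv:2201.05522 — 2 statements merged into one kernel-verified Lean document; each statement's English description precedes it below -/
import Mathlib

section
/- For every integer n ≥ 1 there exists a constant C > 0 depending only on n such that for every continuously differentiable function f : ℝ → ℝ, ∫₀^{2π}∫₀^π f(Y_n⁰(θ)) Y_n⁰(θ) sinθ dθ dφ = C ∫₀^{2π}∫₀^π f'(Y_n⁰(θ)) (Y_n¹(θ,φ))² sinθ dθ dφ, i.e. ⟨f(Y_n⁰), Y_n⁰⟩_{L²(S²)} = C ⟨f'(Y_n⁰)Y_n¹, Y_n¹⟩_{L²(S²)}. -/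
open MeasureTheory
open scoped ENNReal

noncomputable section

/-- Functions on the unit sphere, represented in colatitude-longitude coordinates `(θ, φ)`. -/
abbrev SphereFun : Type := ℝ → ℝ → ℝ

/-- The `L²` inner product on the sphere:
`⟨u,v⟩ = ∫₀^{2π} ∫₀^π u v sin θ dθ dφ`. -/
def sInner (u v : SphereFun) : ℝ :=
  ∫ φ in (0:ℝ)..(2*Real.pi), ∫ θ in (0:ℝ)..Real.pi, u θ φ * v θ φ * Real.sin θ

/-- Legendre polynomials via Rodrigues' formula. -/
def legP (n : ℕ) (s : ℝ) : ℝ :=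
  (1 / ((2:ℝ)^n * (Nat.factorial n : ℝ))) * iteratedDeriv n (fun x : ℝ => (x^2 - 1)^n) s

/-- Associated Legendre functions `P_n^m`. -/
def assocLegP (n m : ℕ) (s : ℝ) : ℝ :=
  (-1 : ℝ)^m * (1 - s^2) ^ ((m : ℝ)/2) * iteratedDeriv m (legP n) s

/-- Real spherical harmonics `Y_n^m`. -/
def Ynm (n : ℕ) (m : ℤ) : SphereFun := fun θ φ =>
  if m = 0 then
    Real.sqrt ((2*(n:ℝ)+1)/(4*Real.pi)) * legP n (Real.cos θ)
  else if 0 < m then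
    (-1 : ℝ)^(m.natAbs) * Real.sqrt 2 *
      Real.sqrt ((2*(n:ℝ)+1)/(4*Real.pi) *
        ((Nat.factorial (n - m.natAbs) : ℝ) / (Nat.factorial (n + m.natAbs) : ℝ))) *
      assocLegP n m.natAbs (Real.cos θ) * Real.cos ((m.natAbs : ℝ) * φ)
  else
    (-1 : ℝ)^(m.natAbs) * Real.sqrt 2 *
      Real.sqrt ((2*(n:ℝ)+1)/(4*Real.pi) *
        ((Nat.factorial (n - m.natAbs) : ℝ) / (Nat.factorial (n + m.natAbs) : ℝ))) *
      assocLegP n m.natAbs (Real.cos θ) * Real.sin ((m.natAbs : ℝ) * φ)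

/-- The spherical-harmonic coefficient `u_n^m = ⟨u, Y_n^m⟩`. -/
def coeff (u : SphereFun) (n : ℕ) (m : ℤ) : ℝ := sInner u (Ynm n m)

/-- `μ_n = n(n+1) + 1`. -/
def muSp (n : ℕ) : ℝ := (n:ℝ)*((n:ℝ)+1)+1

/-- Squared (inhomogeneous) Sobolev norm `‖u‖²_{H^k} = Σ μ_n^k |u_n^m|²`. -/
def sobNormSq (k : ℕ) (u : SphereFun) : ℝ≥0∞ :=
  ∑' p : ℕ × ℤ, if |p.2| ≤ (p.1 : ℤ) then
    ENNReal.ofReal ((muSp p.1)^k * (coeff u p.1 p.2)^2) else 0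

/-- Squared homogeneous Sobolev norm `‖u‖²_{Ḣ^k} = Σ_{n ≥ 1} λ_n^k |u_n^m|²`. -/
def dotNormSq (k : ℕ) (u : SphereFun) : ℝ≥0∞ :=
  ∑' p : ℕ × ℤ, if 1 ≤ p.1 ∧ |p.2| ≤ (p.1 : ℤ) then
    ENNReal.ofReal (((p.1:ℝ)*((p.1:ℝ)+1))^k * (coeff u p.1 p.2)^2) else 0

/-- Squared Gevrey norm `‖u‖²_{G_λ} = Σ_{n ≥ 1} μ_n² e^{2λ√μ_n} |u_n^m|²`. -/
def gevNormSq (lam : ℝ) (u : SphereFun) : ℝ≥0∞ :=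
  ∑' p : ℕ × ℤ, if 1 ≤ p.1 ∧ |p.2| ≤ (p.1 : ℤ) then
    ENNReal.ofReal ((muSp p.1)^2 * Real.exp (2*lam*Real.sqrt (muSp p.1)) *
      (coeff u p.1 p.2)^2) else 0

/-- `∂_θ`. -/
def dTheta (u : SphereFun) : SphereFun := fun θ φ => deriv (fun t => u t φ) θ

/-- `∂_φ`. -/
def dPhi (u : SphereFun) : SphereFun := fun θ φ => deriv (fun p => u θ p) φ

/-- The Laplace–Beltrami operator in colatitude-longitude coordinates:
`Δu = (1/sinθ)∂_θ(sinθ ∂_θu) + (1/sin²θ)∂²_φu`. -/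
def lapS (u : SphereFun) : SphereFun := fun θ φ =>
  (1 / Real.sin θ) * deriv (fun t => Real.sin t * dTheta u t φ) θ
  + (1 / (Real.sin θ)^2) * dPhi (dPhi u) θ φ

/-- A zonal function: one depending only on the colatitude `θ`. -/
def Zonal (u : SphereFun) : Prop := ∀ (θ φ₁ φ₂ : ℝ), u θ φ₁ = u θ φ₂

/-- Zonal on the coordinate chart `θ ∈ [0, π]`. -/
def ZonalOn (u : SphereFun) : Prop :=
  ∀ θ ∈ Set.Icc (0:ℝ) Real.pi, ∀ (φ₁ φ₂ : ℝ), u θ φ₁ = u θ φ₂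

/-- `2π`-periodicity in the longitude. -/
def PeriodicPhi (u : SphereFun) : Prop := ∀ θ φ, u θ (φ + 2*Real.pi) = u θ φ

/-- The advection term `U·∇f` for the velocity `U = ∇⊥Ψ`, i.e.
`(1/sinθ)∂_φΨ ∂_θf − ∂_θΨ (1/sinθ)∂_φf`. -/
def advect (Ψ f : SphereFun) : SphereFun := fun θ φ =>
  (1 / Real.sin θ) * dPhi Ψ θ φ * dTheta f θ φ
  - dTheta Ψ θ φ * ((1 / Real.sin θ) * dPhi f θ φ)

/-- Smoothness in the coordinates. -/
def SphSmooth (u : SphereFun) : Prop := ContDiff ℝ (⊤ : ℕ∞) (Function.uncurry u)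

/-- A function is trivial if it is a zonal function plus an element of
`span{Y₂^m : |m| ≤ 2}`; non-triviality is the negation of this. -/
def SphNontrivial (u : SphereFun) : Prop :=
  ¬ ∃ (z : SphereFun) (c : ℤ → ℝ), Zonal z ∧
      ∀ θ ∈ Set.Icc (0:ℝ) Real.pi, ∀ φ : ℝ,
        u θ φ = z θ φ + ∑ m ∈ Finset.Icc (-2 : ℤ) 2, c m * Ynm 2 m θ φ

/-- Real analyticity on the sphere, characterized by membership in a Gevrey class. -/
def RealAnalyticSphere (u : SphereFun) : Prop := ∃ lam > 0, gevNormSq lam u < ⊤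

/-!
With `s = cos θ`, `Y_n⁰ = Q(s)` for the normalised Legendre polynomial
`Q = √((2n+1)/(4π)) P_n`, and `(Y_n¹)² = 2/(n(n+1)) · cos²φ · (1 - s²) Q'(s)²`.
Both inner products therefore separate into a `φ`-integral (`2π`, resp. `π · 2/(n(n+1))`)
times an integral over `[-1, 1]`. Integrating `f(Q)` by parts against the Legendre equation
`((1 - s²) Q')' = -n(n+1) Q`, whose boundary terms vanish at `s = ±1`, gives
`n(n+1) ∫ f(Q) Q = ∫ f'(Q) (1 - s²) Q'²`, so the two sides agree with `C = 1`.
-/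

namespace Polynomial

variable {R : Type*} [CommRing R]

theorem iterate_derivative_X_sq_sub_one_mul_derivative (u : R[X]) (k : ℕ) :
    derivative^[k + 1] ((X ^ 2 - 1) * derivative u) =
      (X ^ 2 - 1) * derivative^[k + 2] u + 2 * (k + 1 : R[X]) * X * derivative^[k + 1] u +
        (k * (k + 1) : R[X]) * derivative^[k] u := by
  induction k with
  | zero =>
    simp only [zero_add, Function.iterate_succ_apply', derivative_mul,
      derivative_sub, derivative_X_sq, C_ofNat, derivative_one, Function.iterate_zero_apply]
    push_cast
    ring
  | succ k ih =>
    rw [Function.iterate_succ_apply', ih]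
    simp only [Function.iterate_succ_apply', derivative_mul, derivative_add, derivative_sub,
      derivative_X_sq, C_ofNat, derivative_X, derivative_one, derivative_ofNat, derivative_natCast]
    push_cast
    ring

-- Rodrigues: differentiate `(X² - 1) u' = 2n X u`, `u = (X² - 1)ⁿ`, `n + 1` times.
theorem derivative_one_sub_X_sq_mul_derivative_iterate_derivative (n : ℕ) :
    derivative ((1 - X ^ 2) * derivative (derivative^[n] ((X ^ 2 - 1 : R[X]) ^ n))) =
      -(n * (n + 1) : R[X]) * derivative^[n] ((X ^ 2 - 1 : R[X]) ^ n) := by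
  set u : R[X] := (X ^ 2 - 1) ^ n
  have hu : (X ^ 2 - 1) * derivative u = ((2 * n : ℕ) : R[X]) * (u * X) := by
    rcases n with _ | n
    · simp [u]
    · rw [derivative_pow_succ, derivative_sub, derivative_X_sq, derivative_one, sub_zero, C_ofNat,
        ← Nat.cast_succ, map_natCast]
      push_cast
      ring
  have hiter := congrArg (derivative^[n + 1]) hu
  rw [iterate_derivative_X_sq_sub_one_mul_derivative, iterate_derivative_natCast_mul,
    iterate_derivative_mul_X] at hiter
  simp only [derivative_mul, derivative_sub, derivative_X_sq, C_ofNat, derivative_one,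
    Function.iterate_succ_apply', nsmul_eq_mul] at hiter ⊢
  push_cast at hiter ⊢
  linear_combination -hiter

end Polynomial

open Polynomial

theorem Polynomial.iteratedDeriv_eval {𝕜 : Type*} [NontriviallyNormedField 𝕜] (p : 𝕜[X])
    (k : ℕ) : iteratedDeriv k (fun x => p.eval x) = fun x => (derivative^[k] p).eval x := by
  induction k generalizing p with
  | zero => simp
  | succ k ih =>
    have h : deriv (fun x => p.eval x) = fun x => (derivative p).eval x := by
      ext x
      exact p.deriv
    rw [iteratedDeriv_succ', h, ih, Function.iterate_succ_apply]

def legendre (n : ℕ) : ℝ[X] :=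
  C (1 / (2 ^ n * n.factorial : ℝ)) * derivative^[n] ((X ^ 2 - 1) ^ n)

theorem legP_eq_eval_legendre (n : ℕ) : legP n = fun s => (legendre n).eval s := by
  have h : (fun x : ℝ => (x ^ 2 - 1) ^ n) = fun x => (((X : ℝ[X]) ^ 2 - 1) ^ n).eval x := by
    simp
  ext s
  simp [legP, legendre, h, iteratedDeriv_eval]

theorem derivative_one_sub_X_sq_mul_derivative_legendre (n : ℕ) :
    derivative ((1 - X ^ 2) * derivative (legendre n)) =
      -C ((n : ℝ) * (n + 1)) * legendre n := by
  simp only [legendre, derivative_C_mul, mul_left_comm (1 - X ^ 2 : ℝ[X]),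
    derivative_one_sub_X_sq_mul_derivative_iterate_derivative]
  simp only [map_mul, map_add, map_one, map_natCast]
  ring

open Real

theorem integral_comp_cos_mul_sin {F : ℝ → ℝ} (hF : Continuous F) :
    ∫ θ in (0 : ℝ)..π, F (cos θ) * sin θ = ∫ s in (-1 : ℝ)..1, F s := by
  have h := intervalIntegral.integral_comp_mul_deriv (a := 0) (b := π)
    (fun x _ => hasDerivAt_cos x) continuous_sin.neg.continuousOn hF
  simp only [Function.comp_def, mul_neg, intervalIntegral.integral_neg, cos_zero, cos_pi] at h
  rwa [intervalIntegral.integral_symm (-1) 1, neg_inj] at h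

theorem integral_integral_mul_comp_cos_mul_sin (G : ℝ → ℝ) {F : ℝ → ℝ}
    (hF : Continuous F) :
    ∫ φ in (0 : ℝ)..2 * π, ∫ θ in (0 : ℝ)..π, G φ * F (cos θ) * sin θ =
      (∫ φ in (0 : ℝ)..2 * π, G φ) * ∫ s in (-1 : ℝ)..1, F s := by
  simp only [mul_assoc, intervalIntegral.integral_const_mul, integral_comp_cos_mul_sin hF,
    intervalIntegral.integral_mul_const]

theorem mul_integral_comp_mul_eq_of_legendre_equation {P : ℝ[X]} {lam : ℝ}
    (hP : derivative ((1 - X ^ 2) * derivative P) = -C lam * P) {f : ℝ → ℝ}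
    (hf : ContDiff ℝ 1 f) :
    lam * ∫ s in (-1 : ℝ)..1, f (P.eval s) * P.eval s =
      ∫ s in (-1 : ℝ)..1, deriv f (P.eval s) * ((1 - s ^ 2) * (derivative P).eval s ^ 2) := by
  set W : ℝ[X] := (1 - X ^ 2) * derivative P
  have hfP : ∀ x ∈ Set.uIcc (-1 : ℝ) 1, HasDerivAt (fun s => f (P.eval s))
      (deriv f (P.eval x) * (derivative P).eval x) x := fun x _ =>
    ((hf.differentiable one_ne_zero).differentiableAt.hasDerivAt).comp x (P.hasDerivAt x)
  have hW : ∀ x ∈ Set.uIcc (-1 : ℝ) 1,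
      HasDerivAt (fun s => W.eval s) ((derivative W).eval x) x := fun x _ => W.hasDerivAt x
  have hfP' : Continuous fun x => deriv f (P.eval x) * (derivative P).eval x :=
    ((hf.continuous_deriv le_rfl).comp P.continuous).mul (derivative P).continuous
  calc lam * ∫ s in (-1 : ℝ)..1, f (P.eval s) * P.eval s
      = -∫ s in (-1 : ℝ)..1, f (P.eval s) * (derivative W).eval s := by
        rw [← intervalIntegral.integral_const_mul, ← intervalIntegral.integral_neg]
        congr 1 with s
        simp only [hP, eval_mul, eval_neg, eval_C]
        ring
    _ = ∫ s in (-1 : ℝ)..1, deriv f (P.eval s) * (derivative P).eval s * W.eval s := by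
        rw [intervalIntegral.integral_mul_deriv_eq_deriv_mul hfP hW (hfP'.intervalIntegrable _ _)
          ((derivative W).continuous.intervalIntegrable _ _)]
        simp [W]
    _ = _ := by
        congr 1 with s
        simp only [W, eval_mul, eval_sub, eval_one, eval_pow, eval_X]
        ring

def normalizedLegendre (n : ℕ) : ℝ[X] := C √((2 * n + 1) / (4 * π)) * legendre n

theorem derivative_one_sub_X_sq_mul_derivative_normalizedLegendre (n : ℕ) :
    derivative ((1 - X ^ 2) * derivative (normalizedLegendre n)) =
      -C ((n : ℝ) * (n + 1)) * normalizedLegendre n := by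
  rw [normalizedLegendre, derivative_C_mul, mul_left_comm, derivative_C_mul,
    derivative_one_sub_X_sq_mul_derivative_legendre]
  ring

theorem Ynm_zero_apply (n : ℕ) (θ φ : ℝ) :
    Ynm n 0 θ φ = (normalizedLegendre n).eval (cos θ) := by
  simp [Ynm, normalizedLegendre, legP_eq_eval_legendre]

theorem factorial_sub_one_div_factorial_add_one {n : ℕ} (hn : 1 ≤ n) :
    ((n - 1).factorial / (n + 1).factorial : ℝ) = 1 / (n * (n + 1)) := by
  obtain ⟨m, rfl⟩ := Nat.exists_eq_add_of_le' hn
  rw [Nat.add_sub_cancel, Nat.factorial_succ, Nat.factorial_succ]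
  push_cast
  field_simp

theorem Ynm_one_mul_self {n : ℕ} (hn : 1 ≤ n) (θ φ : ℝ) :
    Ynm n 1 θ φ * Ynm n 1 θ φ = 2 / (n * (n + 1)) * cos φ ^ 2 *
      ((1 - cos θ ^ 2) * (derivative (normalizedLegendre n)).eval (cos θ) ^ 2) := by
  have hsq : 0 ≤ 1 - cos θ ^ 2 := sub_nonneg.2 (cos_sq_le_one θ)
  have hrpow :
      (1 - cos θ ^ 2) ^ ((1 : ℝ) / 2) * (1 - cos θ ^ 2) ^ ((1 : ℝ) / 2) = 1 - cos θ ^ 2 := by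
    rw [← sqrt_eq_rpow, mul_self_sqrt hsq]
  have hderiv : iteratedDeriv 1 (legP n) = fun s => (derivative (legendre n)).eval s := by
    rw [legP_eq_eval_legendre, iteratedDeriv_eval]
    rfl
  have hnorm : 0 ≤ (2 * n + 1) / (4 * π) := by positivity
  simp only [Ynm, one_ne_zero, if_false, zero_lt_one, if_true, Int.natAbs_one, Nat.cast_one,
    one_mul, pow_one, assocLegP, hderiv, factorial_sub_one_div_factorial_add_one hn,
    normalizedLegendre, derivative_C_mul, eval_mul, eval_C]
  rw [show ∀ a b c d e : ℝ, -1 * a * b * (-1 * c * d) * e * (-1 * a * b * (-1 * c * d) * e) =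
      (a * a) * (b * b) * (c * c) * d ^ 2 * e ^ 2 by intros; ring,
    mul_self_sqrt two_pos.le, mul_self_sqrt (by positivity), hrpow, mul_pow, sq_sqrt hnorm]
  ring

theorem sInner_comp_Ynm_zero (n : ℕ) {f : ℝ → ℝ} (hf : Continuous f) :
    sInner (fun θ φ => f (Ynm n 0 θ φ)) (Ynm n 0) =
      2 * π * ∫ s in (-1 : ℝ)..1,
        f ((normalizedLegendre n).eval s) * (normalizedLegendre n).eval s := by
  have h := integral_integral_mul_comp_cos_mul_sin (fun _ => 1)
    (F := fun s => f ((normalizedLegendre n).eval s) * (normalizedLegendre n).eval s)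
    (by fun_prop)
  simpa [sInner, Ynm_zero_apply] using h

theorem sInner_mul_Ynm_one {n : ℕ} (hn : 1 ≤ n) {g : ℝ → ℝ} (hg : Continuous g) :
    sInner (fun θ φ => g (Ynm n 0 θ φ) * Ynm n 1 θ φ) (Ynm n 1) =
      2 * π / (n * (n + 1)) * ∫ s in (-1 : ℝ)..1, g ((normalizedLegendre n).eval s) *
        ((1 - s ^ 2) * (derivative (normalizedLegendre n)).eval s ^ 2) := by
  set Q := normalizedLegendre n
  set F : ℝ → ℝ := fun s => g (Q.eval s) * ((1 - s ^ 2) * (derivative Q).eval s ^ 2)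
  have hsep := integral_integral_mul_comp_cos_mul_sin (fun φ => 2 / (n * (n + 1)) * cos φ ^ 2)
    (F := F) (by fun_prop)
  unfold sInner
  calc _ = ∫ φ in (0 : ℝ)..2 * π, ∫ θ in (0 : ℝ)..π,
        2 / (n * (n + 1)) * cos φ ^ 2 * F (cos θ) * sin θ := by
        congr 1 with φ
        congr 1 with θ
        rw [mul_assoc (g _), Ynm_one_mul_self hn, Ynm_zero_apply]
        ring
    _ = _ := by
        rw [hsep, intervalIntegral.integral_const_mul, integral_cos_sq]
        simp only [cos_two_pi, sin_two_pi, cos_zero, sin_zero]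
        ring

/-- For every `n ≥ 1` there is `C > 0` depending only on `n`
such that `⟨f(Y_n⁰), Y_n⁰⟩ = C⟨f'(Y_n⁰)Y_n¹, Y_n¹⟩` for all `f ∈ C¹`. -/
theorem inner_f_Yn0_eq_inner_deriv_Yn1 (n : ℕ) (hn : 1 ≤ n) :
    ∃ C : ℝ, 0 < C ∧
      ∀ f : ℝ → ℝ, ContDiff ℝ 1 f →
        sInner (fun θ φ => f (Ynm n 0 θ φ)) (Ynm n 0)
          = C * sInner (fun θ φ => deriv f (Ynm n 0 θ φ) * Ynm n 1 θ φ) (Ynm n 1) := by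
  refine ⟨1, one_pos, fun f hf => ?_⟩
  rw [sInner_comp_Ynm_zero n hf.continuous, sInner_mul_Ynm_one hn (hf.continuous_deriv le_rfl),
    ← mul_integral_comp_mul_eq_of_legendre_equation
      (derivative_one_sub_X_sq_mul_derivative_normalizedLegendre n) hf]
  field_simp
end
end

section
/- Let N ≥ 1 be an integer, let K, c, Λ > 0, and let y : [0,Λ] → [0,∞) be differentiable with y'(λ) ≤ K e^{cλ}(1 + y(λ)^N) for all λ ∈ [0,Λ]. Then for every λ ∈ [0,Λ] such that (1+y(0)^N)·N·K·(e^{cλ}−1)/c < 1, one has y(λ)^N ≤ (y(0)^N + (1+y(0)^N)·N·K·(e^{cλ}−1)/c) / (1 − (1+y(0)^N)·N·K·(e^{cλ}−1)/c). -/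
/-!
Put `z = 1 + y ^ N`. Since `y ^ (N - 1) ≤ 1 + y ^ N`, the hypothesis gives the Riccati inequality
`z' ≤ N K e^{cλ} z ²`, i.e. `(1 / z)' ≥ -N K e^{cλ}`. Integrating from `0` bounds `1 / z(λ)` below by
`1 / z(0) - N K (e^{cλ} - 1) / c`, and inverting this bound while it stays positive gives the claim.
-/

open Set

lemma pow_pred_le_one_add_pow {a : ℝ} (ha : 0 ≤ a) (N : ℕ) : a ^ (N - 1) ≤ 1 + a ^ N := by
  rcases le_or_gt a 1 with h | h
  · linarith [pow_le_one₀ ha h (n := N - 1), pow_nonneg ha N]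
  · linarith [pow_le_pow_right₀ h.le (Nat.sub_le N 1), pow_nonneg ha N]

lemma natCast_mul_pow_pred_mul_le_mul_one_add_pow_sq {N : ℕ} {a d B : ℝ} (ha : 0 ≤ a) (hB : 0 ≤ B)
    (hd : d ≤ B * (1 + a ^ N)) : N * a ^ (N - 1) * d ≤ N * B * (1 + a ^ N) ^ 2 := by
  have hz : 0 ≤ 1 + a ^ N := by positivity
  calc (N : ℝ) * a ^ (N - 1) * d ≤ N * a ^ (N - 1) * (B * (1 + a ^ N)) := by gcongr
    _ ≤ N * (1 + a ^ N) * (B * (1 + a ^ N)) := by gcongr; exact pow_pred_le_one_add_pow ha N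
    _ = N * B * (1 + a ^ N) ^ 2 := by ring

section Riccati

variable {z z' F k : ℝ → ℝ} {a b : ℝ}

/-- The Riccati inequality `z' ≤ F' z ²` says exactly that `1 / z + F` is monotone. -/
lemma inv_sub_sub_le_inv_of_hasDerivAt_le_mul_sq (hz : ∀ s ∈ Icc a b, 0 < z s)
    (hz' : ∀ s ∈ Icc a b, HasDerivAt z (z' s) s) (hF : ∀ s ∈ Icc a b, HasDerivAt F (k s) s)
    (hle : ∀ s ∈ Icc a b, z' s ≤ k s * z s ^ 2) {t : ℝ} (ht : t ∈ Icc a b) :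
    (z a)⁻¹ - (F t - F a) ≤ (z t)⁻¹ := by
  have hg : ∀ s ∈ Icc a b, HasDerivAt (fun x ↦ (z x)⁻¹ + F x) (-z' s / z s ^ 2 + k s) s :=
    fun s hs ↦ ((hz' s hs).inv (hz s hs).ne').add (hF s hs)
  have hmono : MonotoneOn (fun x ↦ (z x)⁻¹ + F x) (Icc a b) := by
    refine monotoneOn_of_hasDerivWithinAt_nonneg (convex_Icc a b)
      (fun s hs ↦ (hg s hs).continuousAt.continuousWithinAt)
      (fun s hs ↦ (hg s (interior_subset hs)).hasDerivWithinAt) fun s hs ↦ ?_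
    have hs := interior_subset hs
    have hzs := hz s hs
    rw [neg_div, le_neg_add_iff_le, div_le_iff₀ (by positivity)]
    exact hle s hs
  have := hmono (left_mem_Icc.2 (ht.1.trans ht.2)) ht ht.1
  linarith

lemma le_div_one_sub_of_hasDerivAt_le_mul_sq (hz : ∀ s ∈ Icc a b, 0 < z s)
    (hz' : ∀ s ∈ Icc a b, HasDerivAt z (z' s) s) (hF : ∀ s ∈ Icc a b, HasDerivAt F (k s) s)
    (hle : ∀ s ∈ Icc a b, z' s ≤ k s * z s ^ 2) {t : ℝ} (ht : t ∈ Icc a b)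
    (hsmall : z a * (F t - F a) < 1) :
    z t ≤ z a / (1 - z a * (F t - F a)) := by
  have hza := hz a (left_mem_Icc.2 (ht.1.trans ht.2))
  have hlow : (z a)⁻¹ - (F t - F a) = (1 - z a * (F t - F a)) / z a := by
    field_simp
  have hinv := inv_sub_sub_le_inv_of_hasDerivAt_le_mul_sq hz hz' hF hle ht
  rw [hlow] at hinv
  simpa using inv_anti₀ (div_pos (sub_pos.2 hsmall) hza) hinv

end Riccati

theorem riccati_gronwall_inequality_general (N : ℕ)
    (K c Λ : ℝ) (hK : 0 < K) (hc : 0 < c)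
    (y d : ℝ → ℝ)
    (hpos : ∀ t ∈ Set.Icc (0:ℝ) Λ, 0 ≤ y t)
    (hderiv : ∀ t ∈ Set.Icc (0:ℝ) Λ, HasDerivAt y (d t) t)
    (hineq : ∀ t ∈ Set.Icc (0:ℝ) Λ, d t ≤ K * Real.exp (c*t) * (1 + y t ^ N)) :
    ∀ t ∈ Set.Icc (0:ℝ) Λ,
      (1 + y 0 ^ N) * N * K * (Real.exp (c*t) - 1)/c < 1 →
      y t ^ N
        ≤ (y 0 ^ N + (1 + y 0 ^ N) * N * K * (Real.exp (c*t) - 1)/c)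
          / (1 - (1 + y 0 ^ N) * N * K * (Real.exp (c*t) - 1)/c) := by
  intro t ht hlt
  have hF : ∀ s ∈ Icc 0 Λ,
      HasDerivAt (fun x ↦ N * K / c * Real.exp (c * x)) (N * (K * Real.exp (c * s))) s := by
    intro s _
    exact (((hasDerivAt_id' s).const_mul c).exp.const_mul (N * K / c)).congr_deriv (by field_simp)
  have hA : (1 + y 0 ^ N) * (N * K / c * Real.exp (c * t) - N * K / c * Real.exp (c * 0))
      = (1 + y 0 ^ N) * N * K * (Real.exp (c * t) - 1) / c := by
    rw [mul_zero, Real.exp_zero]; ring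
  have hz := le_div_one_sub_of_hasDerivAt_le_mul_sq (z := fun s ↦ 1 + y s ^ N)
    (fun s hs ↦ by positivity [hpos s hs])
    (fun s hs ↦ ((hderiv s hs).pow N).const_add 1) hF
    (fun s hs ↦ natCast_mul_pow_pred_mul_le_mul_one_add_pow_sq (hpos s hs) (by positivity)
      (hineq s hs)) ht (by rwa [hA])
  rw [hA] at hz
  rw [le_div_iff₀ (sub_pos.2 hlt)] at hz ⊢
  linarith

/-- Grönwall/Riccati type differential inequality: if
`y' ≤ Ke^{cλ}(1+y^N)` on `[0,Λ]` with `y ≥ 0`, then wherever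
`(1+y(0)^N)NK(e^{cλ}−1)/c < 1` one has
`y(λ)^N ≤ (y(0)^N + (1+y(0)^N)NK(e^{cλ}−1)/c)/(1 − (1+y(0)^N)NK(e^{cλ}−1)/c)`. -/
theorem riccati_gronwall_inequality (N : ℕ) (hN : 1 ≤ N)
    (K c Λ : ℝ) (hK : 0 < K) (hc : 0 < c) (hΛ : 0 < Λ)
    (y d : ℝ → ℝ)
    (hpos : ∀ t ∈ Set.Icc (0:ℝ) Λ, 0 ≤ y t)
    (hderiv : ∀ t ∈ Set.Icc (0:ℝ) Λ, HasDerivAt y (d t) t)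
    (hineq : ∀ t ∈ Set.Icc (0:ℝ) Λ, d t ≤ K * Real.exp (c*t) * (1 + y t ^ N)) :
    ∀ t ∈ Set.Icc (0:ℝ) Λ,
      (1 + y 0 ^ N) * N * K * (Real.exp (c*t) - 1)/c < 1 →
      y t ^ N
        ≤ (y 0 ^ N + (1 + y 0 ^ N) * N * K * (Real.exp (c*t) - 1)/c)
          / (1 - (1 + y 0 ^ N) * N * K * (Real.exp (c*t) - 1)/c) :=
  riccati_gronwall_inequality_general N K c Λ hK hc y d hpos hderiv hineq
end
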